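/- Let b > 0 and μ₀ < μ₁ be real numbers and let m = (μ₀ + μ₁)/2. If the member score has the Laplace distribution with mean μ₁ and scale b and the non-member score has the Laplace distribution with mean μ₀ and scale b, then (1/2)·ℙ(member score ≥ m) + (1/2)·ℙ(non-member score < m) = 1 − (1/2)·exp( −(μ₁ − μ₀)/(2b) ). -/

import Mathlib

open MeasureTheory

/-- The Laplace distribution with mean `μ` and scale `b`, given by the density
`x ↦ (1/(2b))·exp(−|x−μ|/b)` with respect to Lebesgue measure. -/
noncomputable def laplaceMeasure (μ b : ℝ) : Measure ℝ :=
  volume.withDensity fun x => ENNReal.ofReal ((1 / (2 * b)) * Real.exp (-|x - μ| / b))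

/-!
On either side of its mean the Laplace density is a multiple of an exponential `exp (a x)`, so a
tail not containing the mean has mass `exp (-d / b) / 2`, where `d` is its distance from the mean.
At the midpoint `m`, the wrong-side tails `(-∞, m)` of `Laplace(μ₁, b)` and `[m, ∞)` of
`Laplace(μ₀, b)` both have distance `(μ₁ - μ₀) / 2`, and both right-side probabilities are the
complements of these.
-/

open Real Set

section

variable {μ b c : ℝ}

theorem laplaceMeasure_Ici_of_le (hb : 0 < b) (h : μ ≤ c) :
    laplaceMeasure μ b (Ici c) = ENNReal.ofReal (exp (-(c - μ) / b) / 2) := by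
  have hdens : ∀ x ∈ Ici c, (1 / (2 * b)) * exp (-|x - μ| / b)
      = exp (μ / b) / (2 * b) * exp (-b⁻¹ * x) := fun x hx => by
    rw [abs_of_nonneg (by linarith [mem_Ici.1 hx]), show -(x - μ) / b = μ / b + -b⁻¹ * x by ring,
      exp_add]
    ring
  have hint : IntegrableOn (fun x => exp (μ / b) / (2 * b) * exp (-b⁻¹ * x)) (Ici c) :=
    IntegrableOn.congr_set_ae
      ((integrableOn_exp_mul_Ioi (neg_neg_of_pos (inv_pos.2 hb)) c).const_mul _) Ioi_ae_eq_Ici.symm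
  rw [laplaceMeasure, withDensity_apply _ measurableSet_Ici,
    setLIntegral_congr_fun measurableSet_Ici fun x hx => by rw [hdens x hx],
    ← ofReal_integral_eq_lintegral_ofReal hint (.of_forall fun x => by positivity),
    integral_Ici_eq_integral_Ioi, integral_const_mul,
    integral_exp_mul_Ioi (neg_neg_of_pos (inv_pos.2 hb))]
  congr 1
  rw [show -(c - μ) / b = μ / b + -b⁻¹ * c by ring, exp_add]
  field_simp

theorem laplaceMeasure_Iio_of_le (hb : 0 < b) (h : c ≤ μ) :
    laplaceMeasure μ b (Iio c) = ENNReal.ofReal (exp ((c - μ) / b) / 2) := by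
  have hdens : ∀ x ∈ Iio c, (1 / (2 * b)) * exp (-|x - μ| / b)
      = exp (-μ / b) / (2 * b) * exp (b⁻¹ * x) := fun x hx => by
    rw [abs_of_nonpos (by linarith [mem_Iio.1 hx]), show - -(x - μ) / b = -μ / b + b⁻¹ * x by ring,
      exp_add]
    ring
  have hint : IntegrableOn (fun x => exp (-μ / b) / (2 * b) * exp (b⁻¹ * x)) (Iio c) :=
    ((integrableOn_exp_mul_Iic (inv_pos.2 hb) c).mono_set Iio_subset_Iic_self).const_mul _
  rw [laplaceMeasure, withDensity_apply _ measurableSet_Iio,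
    setLIntegral_congr_fun measurableSet_Iio fun x hx => by rw [hdens x hx],
    ← ofReal_integral_eq_lintegral_ofReal hint (.of_forall fun x => by positivity),
    ← integral_Iic_eq_integral_Iio, integral_const_mul, integral_exp_mul_Iic (inv_pos.2 hb)]
  congr 1
  rw [show (c - μ) / b = -μ / b + b⁻¹ * c by ring, exp_add]
  field_simp

theorem isProbabilityMeasure_laplaceMeasure (hb : 0 < b) :
    IsProbabilityMeasure (laplaceMeasure μ b) where
  measure_univ := by
    rw [← Iio_union_Ici, measure_union (Iio_disjoint_Ici le_rfl) measurableSet_Ici,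
      laplaceMeasure_Iio_of_le hb le_rfl, laplaceMeasure_Ici_of_le hb le_rfl,
      ← ENNReal.ofReal_add (by positivity) (by positivity)]
    norm_num

end

/-- Balanced accuracy of the midpoint-threshold test between a member score
distributed `Laplace(μ₁, b)` and a non-member score distributed `Laplace(μ₀, b)`:
it equals `1 − (1/2)·exp(−(μ₁ − μ₀)/(2b))`. -/
theorem laplace_midpoint_balanced_accuracy
    (b : ℝ) (hb : 0 < b) (μ₀ μ₁ : ℝ) (hμ : μ₀ < μ₁) :
    2⁻¹ * laplaceMeasure μ₁ b (Set.Ici ((μ₀ + μ₁) / 2))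
      + 2⁻¹ * laplaceMeasure μ₀ b (Set.Iio ((μ₀ + μ₁) / 2))
      = ENNReal.ofReal (1 - (1 / 2) * Real.exp (-(μ₁ - μ₀) / (2 * b))) := by
  have := isProbabilityMeasure_laplaceMeasure (μ := μ₀) hb
  have := isProbabilityMeasure_laplaceMeasure (μ := μ₁) hb
  set E := ENNReal.ofReal ((1 / 2) * exp (-(μ₁ - μ₀) / (2 * b)))
  have hwrong₁ : laplaceMeasure μ₁ b (Iio ((μ₀ + μ₁) / 2)) = E := by
    rw [laplaceMeasure_Iio_of_le hb (by linarith)]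
    congr 1
    field_simp
    ring_nf
  have hwrong₀ : laplaceMeasure μ₀ b (Ici ((μ₀ + μ₁) / 2)) = E := by
    rw [laplaceMeasure_Ici_of_le hb (by linarith)]
    congr 1
    field_simp
    ring_nf
  rw [← compl_Iio, prob_compl_eq_one_sub measurableSet_Iio, hwrong₁, ← compl_Ici,
    prob_compl_eq_one_sub measurableSet_Ici, hwrong₀, ← add_mul, ENNReal.inv_two_add_inv_two,
    one_mul, ← ENNReal.ofReal_one, ← ENNReal.ofReal_sub _ (by positivity)]
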